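/- Let G be a finite p-group with a unique A₂-subgroup K and |G'| ≥ p². Then K is not contained in Φ(G) if and only if G has a minimal non-abelian subgroup of index p. -/

import Mathlib

/-- `G` is a minimal non-abelian group: non-abelian, but all proper subgroups abelian. -/
def IsMinimalNonabelian (G : Type*) [Group G] : Prop :=
  (¬ ∀ a b : G, a * b = b * a) ∧
    ∀ H : Subgroup G, H ≠ ⊤ → ∀ a ∈ H, ∀ b ∈ H, a * b = b * a

/-- `G` is an `𝒜_t`-group: it has a non-abelian subgroup of index `p ^ (t-1)`,
but all subgroups of index `p ^ t` are abelian. -/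
def IsAGroup (p t : ℕ) (G : Type*) [Group G] : Prop :=
  (∃ H : Subgroup G, H.index = p ^ (t - 1) ∧ ¬ ∀ a ∈ H, ∀ b ∈ H, a * b = b * a) ∧
    ∀ H : Subgroup G, H.index = p ^ t → ∀ a ∈ H, ∀ b ∈ H, a * b = b * a

/-!
If `K ≤ Φ(G)`, then `K` lies in every maximal subgroup; but a minimal non-abelian group `M`
cannot contain a subgroup `K` that is non-abelian and has a non-abelian proper subgroup.

Conversely, let `K ≰ Φ(G)` and assume no maximal subgroup is minimal non-abelian. By uniqueness
of `K`, a maximal subgroup `N` with `K ≰ N` has no `𝒜₂`-subgroup, and a `p`-group without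
`𝒜₂`-subgroups is abelian or minimal non-abelian, so `N` is abelian. As `G` is not cyclic,
multiplying the characters `G → ℤ/p` of two maximal subgroups produces a second maximal subgroup
avoiding `K`. Finally two distinct abelian maximal subgroups `A`, `B` force `|G'| ≤ p`: `A ∩ B`
is central, and for `c ∈ B \ A` the map `a ↦ ⁅a, c⁆` is a homomorphism on `A`, trivial on
`A ∩ B`, whose image contains `G'`.
-/

open Subgroup
open scoped commutatorElement

theorem isMinimalNonabelian_iff {G : Type*} [Group G] :
    IsMinimalNonabelian G ↔
      ¬ IsMulCommutative G ∧ ∀ H : Subgroup G, H ≠ ⊤ → IsMulCommutative H := by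
  rw [IsMinimalNonabelian, isMulCommutative_iff]
  simp only [isMulCommutative_iff_of_setLike]

theorem isAGroup_iff {p t : ℕ} {G : Type*} [Group G] :
    IsAGroup p t G ↔ (∃ H : Subgroup G, H.index = p ^ (t - 1) ∧ ¬ IsMulCommutative H) ∧
      ∀ H : Subgroup G, H.index = p ^ t → IsMulCommutative H := by
  simp only [IsAGroup, isMulCommutative_iff_of_setLike]

theorem Subgroup.isMulCommutative_of_le {G : Type*} [Group G] {H K : Subgroup G}
    (hHK : H ≤ K) [IsMulCommutative K] : IsMulCommutative H :=
  .of_setLike_mul_comm fun _ ha _ hb => setLike_mul_comm (hHK ha) (hHK hb)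

theorem IsMinimalNonabelian.isMulCommutative_of_lt {G : Type*} [Group G]
    {H M : Subgroup G} (hM : IsMinimalNonabelian M) (hHM : H < M) : IsMulCommutative H := by
  have := (isMinimalNonabelian_iff.mp hM).2 (H.subgroupOf M) (by simpa using hHM.not_ge)
  rw [← map_subgroupOf_eq_of_le hHM.le]
  infer_instance

theorem IsAGroup.of_mulEquiv {p t : ℕ} {G₁ G₂ : Type*} [Group G₁] [Group G₂]
    (e : G₁ ≃* G₂) (h : IsAGroup p t G₁) : IsAGroup p t G₂ := by
  rw [isAGroup_iff] at h ⊢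
  obtain ⟨⟨H, hHi, hH⟩, hab⟩ := h
  let f : G₁ →* G₂ := e
  refine ⟨⟨H.map f, by rw [index_map_equiv, hHi], fun hc => hH ?_⟩, fun L hL => ?_⟩
  · rw [← comap_map_eq_self_of_injective (f := f) e.injective H]
    exact comap_injective_isMulCommutative _ e.injective
  · have := hab (L.comap f) (by rw [index_comap_of_surjective _ e.surjective, hL])
    rw [← map_comap_eq_self_of_surjective (f := f) e.surjective L]
    infer_instance

theorem IsAGroup.map_subtype {p t : ℕ} {G : Type*} [Group G] {H : Subgroup G}
    {L : Subgroup H} (hL : IsAGroup p t L) : IsAGroup p t (L.map H.subtype) :=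
  .of_mulEquiv (L.equivMapOfInjective _ H.subtype_injective) hL

theorem IsAGroup.not_le_of_isMinimalNonabelian {p : ℕ} (hp : p ≠ 1) {G : Type*} [Group G]
    {K M : Subgroup G} (hK : IsAGroup p 2 K) (hM : IsMinimalNonabelian M) : ¬ K ≤ M := by
  obtain ⟨⟨H, hHi, hH⟩, -⟩ := isAGroup_iff.mp hK
  intro hKM
  rcases hKM.lt_or_eq with hlt | rfl
  · have := hM.isMulCommutative_of_lt hlt
    exact hH inferInstance
  · refine hH ((isMinimalNonabelian_iff.mp hM).2 H ?_)
    rintro rfl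
    simp [eq_comm, hp] at hHi

theorem Subgroup.isCoatom_of_index_eq_prime {G : Type*} [Group G] {p : ℕ} (hp : p.Prime)
    {M : Subgroup G} (h : M.index = p) : IsCoatom M := by
  refine ⟨fun hM => hp.one_lt.ne' (by rw [← h, hM, index_top]), fun K hMK => ?_⟩
  rw [← index_eq_one]
  have : M.FiniteIndex := ⟨h ▸ hp.ne_zero⟩
  have hdvd : K.index ∣ p := h ▸ index_dvd_of_le hMK.le
  have hlt : K.index < p := h ▸ index_strictAnti hMK
  exact (hp.eq_one_or_self_of_dvd _ hdvd).resolve_right hlt.ne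

theorem MonoidHom.isCoatom_ker {G C : Type*} [Group G] [Group C] {p : ℕ} [Fact p.Prime]
    (hC : Nat.card C = p) {f : G →* C} (hf : f ≠ 1) : IsCoatom f.ker := by
  have : Fact (Nat.card C).Prime := hC ▸ ‹_›
  refine isCoatom_of_index_eq_prime (Fact.out : p.Prime) ?_
  have hrange : f.range = ⊤ :=
    f.range.eq_bot_or_eq_top_of_prime_card.resolve_left (mt MonoidHom.range_eq_bot_iff.mp hf)
  rw [index_ker, hrange, card_top, hC]

theorem commutator_le_of_closure_eq_top {G : Type*} [Group G] {N : Subgroup G} [N.Normal]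
    {S : Set G} (hS : closure S = ⊤) (h : ∀ x ∈ S, ∀ y ∈ S, ⁅x, y⁆ ∈ N) :
    commutator G ≤ N := by
  rw [← Normal.quotient_commutative_iff_commutator_le]
  have hcomm : ∀ x ∈ QuotientGroup.mk' N '' S, ∀ y ∈ QuotientGroup.mk' N '' S,
      x * y = y * x := by
    rintro - ⟨x, hx, rfl⟩ - ⟨y, hy, rfl⟩
    rw [← commutatorElement_eq_one_iff_mul_comm, ← map_commutatorElement,
      QuotientGroup.mk'_apply, QuotientGroup.eq_one_iff]
    exact h x hx y hy
  have := isMulCommutative_closure hcomm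
  rw [← MonoidHom.map_closure, hS, map_top_of_surjective _ (QuotientGroup.mk'_surjective N)]
    at this
  exact .of_comm fun a b => setLike_mul_comm (mem_top a) (mem_top b)

theorem commutatorElement_mul_left_of_mem_center {G : Type*} [Group G] {a b c : G}
    (h : ⁅b, c⁆ ∈ center G) : ⁅a * b, c⁆ = ⁅a, c⁆ * ⁅b, c⁆ := by
  rw [commutatorElement_mul_left_eq_conj_mul, mem_center_iff.mp h a, mul_inv_cancel_right,
    mem_center_iff.mp h]

namespace IsPGroup

variable {p : ℕ} [Fact p.Prime] {G : Type*} [Group G] [Finite G]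

theorem normal_of_isCoatom (hG : IsPGroup p G) {M : Subgroup G} (hM : IsCoatom M) : M.Normal :=
  have := hG.isNilpotent
  NormalizerCondition.normal_of_coatom M Group.normalizerCondition_of_isNilpotent hM

theorem index_eq_of_isCoatom (hG : IsPGroup p G) {M : Subgroup G} (hM : IsCoatom M) :
    M.index = p := by
  obtain ⟨n, hn⟩ := iff_card.mp (hG.to_subgroup M)
  obtain ⟨k, hk⟩ := hG.index M
  have hcard : Nat.card G = p ^ (n + k) := by rw [← M.card_mul_index, hn, hk, pow_add]
  have hk0 : k ≠ 0 := by
    rintro rfl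
    exact hM.1 (index_eq_one.mp hk)
  obtain ⟨K, hK, hMK⟩ :=
    Sylow.exists_subgroup_card_pow_succ (hcard ▸ pow_dvd_pow p (by omega)) hn
  have hp := (Fact.out : p.Prime).one_lt
  have hKM : K ≠ M := by
    rintro rfl
    exact (Nat.pow_lt_pow_right hp n.lt_succ_self).ne (hn.symm.trans hK)
  rw [hM.2 K (hMK.lt_of_ne hKM.symm), card_top, hcard] at hK
  have hk1 : k = 1 := by
    have := Nat.pow_right_injective hp hK
    omega
  rw [hk, hk1, pow_one]

theorem exists_ker_eq_of_isCoatom (hG : IsPGroup p G) {M : Subgroup G} (hM : IsCoatom M) :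
    ∃ f : G →* Multiplicative (ZMod p), f.ker = M := by
  have := hG.normal_of_isCoatom hM
  let e : G ⧸ M ≃* Multiplicative (ZMod p) := mulEquivOfPrimeCardEq
    (by rw [← index_eq_card, hG.index_eq_of_isCoatom hM]) (by simp)
  exact ⟨(e : G ⧸ M →* _).comp (QuotientGroup.mk' M), by simp⟩

theorem exists_isCoatom_ne_notMem (hG : IsPGroup p G) (hcyc : ¬ IsCyclic G)
    {M : Subgroup G} (hM : IsCoatom M) {y : G} (hy : y ∉ M) :
    ∃ N : Subgroup G, IsCoatom N ∧ N ≠ M ∧ y ∉ N := by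
  obtain ⟨N, hN, hyN⟩ := (eq_top_or_exists_le_coatom (zpowers y)).resolve_left
    fun h => hcyc (isCyclic_iff_exists_zpowers_eq_top.mpr ⟨y, h⟩)
  obtain ⟨f, rfl⟩ := hG.exists_ker_eq_of_isCoatom hM
  obtain ⟨g, rfl⟩ := hG.exists_ker_eq_of_isCoatom hN
  have hgy : g y = 1 := hyN (mem_zpowers y)
  -- The kernel of `f * g` avoids `y` (as `g y = 1`) and is not `f.ker` (as `g` is not
  -- trivial on `f.ker`).
  obtain ⟨w, hwf, hwg⟩ : ∃ w ∈ f.ker, w ∉ g.ker := by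
    refine SetLike.not_le_iff_exists.mp fun hle => hy ?_
    rw [((hM.le_iff.mp hle).resolve_left hN.1).symm]
    exact hgy
  have hfgy : (f * g) y ≠ 1 := by simpa [hgy] using hy
  have hfg : IsCoatom (f * g).ker := MonoidHom.isCoatom_ker (p := p) (by simp) fun h =>
    hfgy (by simp [h])
  refine ⟨(f * g).ker, hfg, fun h => ?_, hfgy⟩
  have hfgw : (f * g) w = 1 := by rwa [← MonoidHom.mem_ker, h]
  exact hwg (by simpa [MonoidHom.mem_ker.mp hwf] using hfgw)

theorem card_commutator_le_of_isCoatom (hG : IsPGroup p G) {A B : Subgroup G}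
    (hA : IsCoatom A) (hB : IsCoatom B) (hAB : A ≠ B) [IsMulCommutative A]
    [IsMulCommutative B] : Nat.card (commutator G) ≤ p := by
  have := hG.normal_of_isCoatom hA
  have := hG.normal_of_isCoatom hB
  have hcenter : A ⊓ B ≤ center G := by
    rw [← centralizer_univ, ← coe_top, le_centralizer_iff, ← hA.sup_eq_top_of_ne hB hAB]
    exact sup_le ((le_centralizer A).trans (centralizer_le fun _ hx => hx.1))
      ((le_centralizer B).trans (centralizer_le fun _ hx => hx.2))
  obtain ⟨c, hcB, hcA⟩ := SetLike.not_le_iff_exists.mp fun h =>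
    hAB (hB.le_iff.mp h |>.resolve_left hA.1)
  have hmem : ∀ a ∈ A, ⁅a, c⁆ ∈ A ⊓ B := fun a ha =>
    commutator_le_inf A B (commutator_mem_commutator ha hcB)
  let f : A →* G := MonoidHom.mk' (fun a => ⁅(a : G), c⁆) fun a b =>
    commutatorElement_mul_left_of_mem_center (hcenter (hmem b b.2))
  have hW : f.range ≤ center G := by
    rintro - ⟨a, rfl⟩
    exact hcenter (hmem a a.2)
  have : f.range.Normal :=
    ⟨fun x hx g => by rwa [mem_center_iff.mp (hW hx) g, mul_inv_cancel_right]⟩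
  have hker : B.subgroupOf A ≤ f.ker := fun a ha =>
    commutatorElement_eq_one_iff_mul_comm.mpr (setLike_mul_comm (mem_subgroupOf.mp ha) hcB)
  have hcard : Nat.card f.range ∣ p := by
    rw [← index_ker, ← hG.index_eq_of_isCoatom hB]
    exact (index_dvd_of_le hker).trans (relIndex_dvd_index_of_normal B A)
  have hgen : closure (A ∪ {c}) = ⊤ := by
    rw [Subgroup.closure_union, closure_eq, ← hA.lt_iff]
    exact lt_of_le_of_ne le_sup_left fun h => hcA (h ▸ mem_sup_right (subset_closure rfl))
  have hcomm : commutator G ≤ f.range := by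
    refine commutator_le_of_closure_eq_top hgen ?_
    rintro x (hx | rfl) y (hy | rfl)
    · rw [commutatorElement_eq_one_iff_mul_comm.mpr (setLike_mul_comm hx hy)]
      exact one_mem _
    · exact ⟨⟨x, hx⟩, rfl⟩
    · rw [← commutatorElement_inv]
      exact inv_mem ⟨⟨y, hy⟩, rfl⟩
    · rw [commutatorElement_self]
      exact one_mem _
  exact (card_le_of_le hcomm).trans (Nat.le_of_dvd (Fact.out : p.Prime).pos hcard)

theorem isAGroup_two_of_forall_ne_top (hG : IsPGroup p G) (hnc : ¬ IsMulCommutative G)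
    (hnm : ¬ IsMinimalNonabelian G)
    (hsub : ∀ H : Subgroup G, H ≠ ⊤ → IsMulCommutative H ∨ IsMinimalNonabelian H) :
    IsAGroup p 2 G := by
  have hp := (Fact.out : p.Prime).one_lt
  obtain ⟨H, hH, hHc⟩ : ∃ H : Subgroup G, H ≠ ⊤ ∧ ¬ IsMulCommutative H := by
    simpa [isMinimalNonabelian_iff, hnc] using hnm
  refine isAGroup_iff.mpr ⟨?_, fun L hL => ?_⟩
  · obtain ⟨N, hN, hHN⟩ := (eq_top_or_exists_le_coatom H).resolve_left hH
    refine ⟨N, by simpa using hG.index_eq_of_isCoatom hN, fun _ => ?_⟩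
    exact hHc (isMulCommutative_of_le hHN)
  · have hLtop : L ≠ ⊤ := by
      rintro rfl
      exact (Nat.one_lt_pow two_ne_zero hp).ne (by rwa [index_top] at hL)
    obtain ⟨N, hN, hLN⟩ := (eq_top_or_exists_le_coatom L).resolve_left hLtop
    have hLN' : L < N := hLN.lt_of_ne fun h => by
      have := hG.index_eq_of_isCoatom hN
      rw [← h, hL] at this
      exact (Nat.pow_lt_pow_right hp one_lt_two).ne' (this.trans (pow_one p).symm)
    rcases hsub N hN.1 with hNc | hNm
    · exact isMulCommutative_of_le hLN
    · exact hNm.isMulCommutative_of_lt hLN'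

theorem isMulCommutative_or_isMinimalNonabelian (hG : IsPGroup p G)
    (hA : ∀ L : Subgroup G, ¬ IsAGroup p 2 L) :
    IsMulCommutative G ∨ IsMinimalNonabelian G := by
  induction hn : Nat.card G using Nat.strong_induction_on generalizing G with
  | _ n ih =>
  by_contra! h
  refine hA ⊤ (.of_mulEquiv topEquiv.symm
    (hG.isAGroup_two_of_forall_ne_top h.1 h.2 fun H hH => ?_))
  refine ih _ ?_ (hG.to_subgroup H) (fun L hL => hA _ hL.map_subtype) rfl
  exact hn ▸ (card_le_card_group H).lt_of_ne fun h => hH (eq_top_of_card_eq H h)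

end IsPGroup

theorem stmt13 {p : ℕ} (hp : p.Prime) {G : Type*} [Group G] [Finite G]
    (hG : IsPGroup p G) (hG' : p ^ 2 ≤ Nat.card (commutator G))
    {K : Subgroup G} (hK : IsAGroup p 2 ↥K)
    (huniq : ∀ K' : Subgroup G, IsAGroup p 2 ↥K' → K' = K) :
    ¬ K ≤ frattini G ↔ ∃ M : Subgroup G, M.index = p ∧ IsMinimalNonabelian ↥M := by
  have := Fact.mk hp
  constructor
  · intro hKΦ
    by_contra! hno
    have hcomm (N : Subgroup G) (hN : IsCoatom N) (hKN : ¬ K ≤ N) : IsMulCommutative N :=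
      ((hG.to_subgroup N).isMulCommutative_or_isMinimalNonabelian fun L hL =>
          hKN (huniq _ hL.map_subtype ▸ map_subtype_le L)).resolve_right
        (hno N (hG.index_eq_of_isCoatom hN))
    have hcyc : ¬ IsCyclic G := fun _ => by
      rw [commutator_eq_bot, card_bot] at hG'
      exact (Nat.one_lt_pow two_ne_zero hp.one_lt).not_ge hG'
    obtain ⟨M, hM, hKM⟩ : ∃ M : Subgroup G, IsCoatom M ∧ ¬ K ≤ M := by
      simpa [frattini, Order.radical] using hKΦ
    obtain ⟨y, hyK, hyM⟩ := SetLike.not_le_iff_exists.mp hKM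
    obtain ⟨N, hN, hNM, hyN⟩ := hG.exists_isCoatom_ne_notMem hcyc hM hyM
    have := hcomm M hM hKM
    have := hcomm N hN fun h => hyN (h hyK)
    have hle := hG.card_commutator_le_of_isCoatom hN hM hNM
    nlinarith [hp.two_le]
  · rintro ⟨M, hMi, hMmin⟩ hKΦ
    exact hK.not_le_of_isMinimalNonabelian hp.one_lt.ne' hMmin
      (hKΦ.trans (frattini_le_coatom (isCoatom_of_index_eq_prime hp hMi)))
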